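/- Let h ∈ ℝ. Mickens' discrete predator–prey system (x̃ − x)/h = 2x − x̃ − x̃y, (ỹ − y)/h = −ỹ + 2x̃y − x̃ỹ has the unique explicit solution x̃ = x(1 + 2h)/(1 + h + hy), ỹ = y(1 + 2h x̃)/(1 + h + h x̃) whenever the denominators are nonzero, so it defines a birational map φ : (x,y) ↦ (x̃,ỹ) of the plane; moreover, on the open set where φ is defined and differentiable with xy ≠ 0, its Jacobian determinant satisfies det φ'(x,y) = (x̃ỹ)/(xy), i.e., φ preserves the symplectic form ω = (1/(xy)) dx ∧ dy. -/

import Mathlib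

/-!
The map factors as the multiplicative shear `(x, y) ↦ (x a(y), y)` followed by
`(x, y) ↦ (x, y b(x))`, where `a(y) = (1+2h)/(1+h+hy)` and `b(x) = (1+2hx)/(1+h+hx)`.
The Jacobian of such a shear is triangular with determinant `a(y) = x̃/x` (resp. `b(x) = ỹ/y`),
so each shear preserves `ω = dx ∧ dy / (xy)`, and hence so does their composite.
The explicit solution comes from the scheme being linear in `x̃`, and then in `ỹ`.
-/

/-- The explicit rational map defined by Mickens' discrete predator–prey system:
`x̃ = x(1+2h)/(1+h+hy)`, `ỹ = y(1+2hx̃)/(1+h+hx̃)`. -/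
noncomputable def mickensMap (h : ℝ) : ℝ × ℝ → ℝ × ℝ := fun p =>
  let xt := p.1 * (1 + 2 * h) / (1 + h + h * p.2)
  (xt, p.2 * (1 + 2 * h * xt) / (1 + h + h * xt))

theorem ContinuousLinearMap.det_eq_apply_fin_two {𝕜 : Type*} [Field 𝕜] [TopologicalSpace 𝕜]
    (L : 𝕜 × 𝕜 →L[𝕜] 𝕜 × 𝕜) :
    L.det = (L (1, 0)).1 * (L (0, 1)).2 - (L (1, 0)).2 * (L (0, 1)).1 := by
  rw [ContinuousLinearMap.det, ← LinearMap.det_toMatrix (Module.Basis.finTwoProd 𝕜),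
    Matrix.det_fin_two]
  simp only [LinearMap.toMatrix_apply, Module.Basis.finTwoProd_zero, Module.Basis.finTwoProd_one,
    Module.Basis.coe_finTwoProd_repr, coe_coe, Matrix.cons_val_zero, Matrix.cons_val_one,
    Matrix.cons_val_fin_one, sub_right_inj]
  ring

theorem ContinuousLinearMap.det_comp {R M : Type*} [CommRing R] [TopologicalSpace M]
    [AddCommGroup M] [Module R M] (f g : M →L[R] M) : (f.comp g).det = f.det * g.det :=
  LinearMap.det_comp _ _

section LogSymplectic

variable {𝕜 : Type*} [NontriviallyNormedField 𝕜]

/-- `φ^* ω = ω` at `p` for `ω = dx ∧ dy / (xy)`, with the denominators cleared. -/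
def IsLogSymplecticAt (φ : 𝕜 × 𝕜 → 𝕜 × 𝕜) (p : 𝕜 × 𝕜) : Prop :=
  DifferentiableAt 𝕜 φ p ∧ (fderiv 𝕜 φ p).det * (p.1 * p.2) = (φ p).1 * (φ p).2

theorem IsLogSymplecticAt.comp {φ ψ : 𝕜 × 𝕜 → 𝕜 × 𝕜} {p : 𝕜 × 𝕜}
    (hψ : IsLogSymplecticAt ψ (φ p)) (hφ : IsLogSymplecticAt φ p) :
    IsLogSymplecticAt (ψ ∘ φ) p := by
  refine ⟨hψ.1.comp p hφ.1, ?_⟩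
  rw [fderiv_comp p hψ.1 hφ.1, ContinuousLinearMap.det_comp, mul_assoc, hφ.2, hψ.2,
    Function.comp_apply]

theorem IsLogSymplecticAt.det_fderiv_eq {φ : 𝕜 × 𝕜 → 𝕜 × 𝕜} {p : 𝕜 × 𝕜}
    (hφ : IsLogSymplecticAt φ p) (hp : p.1 * p.2 ≠ 0) :
    (fderiv 𝕜 φ p).det = (φ p).1 * (φ p).2 / (p.1 * p.2) :=
  eq_div_of_mul_eq hp hφ.2

def scaleFst (a : 𝕜 → 𝕜) (p : 𝕜 × 𝕜) : 𝕜 × 𝕜 := (p.1 * a p.2, p.2)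

def scaleSnd (b : 𝕜 → 𝕜) (p : 𝕜 × 𝕜) : 𝕜 × 𝕜 := (p.1, p.2 * b p.1)

open ContinuousLinearMap in
theorem isLogSymplecticAt_scaleFst {a : 𝕜 → 𝕜} {p : 𝕜 × 𝕜} (ha : DifferentiableAt 𝕜 a p.2) :
    IsLogSymplecticAt (scaleFst a) p := by
  have hD : HasFDerivAt (scaleFst a)
      ((a p.2 • fst 𝕜 𝕜 𝕜 + (p.1 * deriv a p.2) • snd 𝕜 𝕜 𝕜).prod (snd 𝕜 𝕜 𝕜)) p := by
    refine (hasFDerivAt_fst.mul (ha.hasDerivAt.comp_hasFDerivAt p hasFDerivAt_snd)).prodMk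
      hasFDerivAt_snd |>.congr_fderiv ?_
    ext <;> simp
  refine ⟨hD.differentiableAt, ?_⟩
  rw [hD.fderiv, det_eq_apply_fin_two]
  simp only [prod_apply, add_apply, smul_apply, coe_fst', coe_snd', smul_eq_mul, mul_one,
    mul_zero, add_zero, zero_add, zero_mul, sub_zero, scaleFst]
  ring

open ContinuousLinearMap in
theorem isLogSymplecticAt_scaleSnd {b : 𝕜 → 𝕜} {p : 𝕜 × 𝕜} (hb : DifferentiableAt 𝕜 b p.1) :
    IsLogSymplecticAt (scaleSnd b) p := by
  have hD : HasFDerivAt (scaleSnd b)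
      ((fst 𝕜 𝕜 𝕜).prod ((p.2 * deriv b p.1) • fst 𝕜 𝕜 𝕜 + b p.1 • snd 𝕜 𝕜 𝕜)) p := by
    refine hasFDerivAt_fst.prodMk (hasFDerivAt_snd.mul
      (hb.hasDerivAt.comp_hasFDerivAt p hasFDerivAt_fst)) |>.congr_fderiv ?_
    ext <;> simp
  refine ⟨hD.differentiableAt, ?_⟩
  rw [hD.fderiv, det_eq_apply_fin_two]
  simp only [prod_apply, add_apply, smul_apply, coe_fst', coe_snd', smul_eq_mul, mul_one,
    mul_zero, add_zero, zero_add, one_mul, sub_zero, scaleSnd]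
  ring

end LogSymplectic

theorem mickensMap_eq_comp (h : ℝ) :
    mickensMap h = scaleSnd (fun t => (1 + 2 * h * t) / (1 + h + h * t)) ∘
      scaleFst (fun y => (1 + 2 * h) / (1 + h + h * y)) := by
  funext p
  simp only [mickensMap, scaleFst, scaleSnd, Function.comp_apply, mul_div_assoc]

theorem mickens_fst_eq_iff (h x y xt : ℝ) :
    xt - x = h * (2 * x - xt - xt * y) ↔ xt * (1 + h + h * y) = x * (1 + 2 * h) := by
  constructor <;> intro e <;> linear_combination e

theorem mickens_snd_eq_iff (h y xt yt : ℝ) :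
    yt - y = h * (-yt + 2 * xt * y - xt * yt) ↔ yt * (1 + h + h * xt) = y * (1 + 2 * h * xt) := by
  constructor <;> intro e <;> linear_combination e

/-- Mickens' discrete predator–prey system `(x̃-x)/h = 2x - x̃ - x̃y`,
`(ỹ-y)/h = -ỹ + 2x̃y - x̃ỹ` has the unique explicit solution
`x̃ = x(1+2h)/(1+h+hy)`, `ỹ = y(1+2hx̃)/(1+h+hx̃)` whenever the denominators are
nonzero, so it defines a birational map `φ` of the plane; moreover, where `φ` is
defined and differentiable with `xy ≠ 0`, its Jacobian determinant satisfies
`det φ'(x,y) = x̃ỹ/(xy)`, i.e. `φ` preserves `ω = (1/(xy)) dx ∧ dy`. -/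
theorem mickens_birational_symplectic (h : ℝ) :
    (∀ x y xt yt : ℝ,
      1 + h + h * y ≠ 0 →
      1 + h + h * (x * (1 + 2 * h) / (1 + h + h * y)) ≠ 0 →
      ((xt - x = h * (2 * x - xt - xt * y) ∧
        yt - y = h * (-yt + 2 * xt * y - xt * yt)) ↔
       (xt = x * (1 + 2 * h) / (1 + h + h * y) ∧
        yt = y * (1 + 2 * h * xt) / (1 + h + h * xt))))
    ∧ (∀ p : ℝ × ℝ,
        1 + h + h * p.2 ≠ 0 →
        1 + h + h * (mickensMap h p).1 ≠ 0 →
        p.1 * p.2 ≠ 0 →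
        DifferentiableAt ℝ (mickensMap h) p ∧
        (fderiv ℝ (mickensMap h) p).det
          = (mickensMap h p).1 * (mickensMap h p).2 / (p.1 * p.2)) := by
  refine ⟨fun x y xt yt hd₁ hd₂ => ?_, fun p hd₁ hd₂ hp => ?_⟩
  · rw [mickens_fst_eq_iff, mickens_snd_eq_iff, ← eq_div_iff hd₁]
    refine and_congr_right fun hxt => ?_
    rw [← hxt] at hd₂
    exact eq_div_iff hd₂ |>.symm
  · have hφ : IsLogSymplecticAt (mickensMap h) p := by
      rw [mickensMap_eq_comp] at hd₂ ⊢
      exact (isLogSymplecticAt_scaleSnd (by fun_prop (disch := exact hd₂))).comp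
        (isLogSymplecticAt_scaleFst (by fun_prop (disch := exact hd₁)))
    exact ⟨hφ.1, hφ.det_fderiv_eq hp⟩
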